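/- With the notation above (Pᵢ stable plateaux, Γᵢ their initial depths, Vᵢ = {η : Φ(Pᵢ, η) − H(Pᵢ) < Γᵢ}), the bottom of Vᵢ equals Pᵢ: argmin_{Vᵢ} H = Pᵢ. -/

import Mathlib

open SimpleGraph

variable {Ω : Type*}

/-- The height of a walk: the maximum of the energy `H` along its support. -/
noncomputable def walkHeight (H : Ω → ℝ) {G : SimpleGraph Ω} {a b : Ω} (w : G.Walk a b) : ℝ :=
  (w.support.map H).foldr max (H b)

/-- The communication height between two vertices: minimal height over all paths. -/
noncomputable def commHeight (G : SimpleGraph Ω) (H : Ω → ℝ) (a b : Ω) : ℝ :=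
  sInf {h : ℝ | ∃ w : G.Walk a b, walkHeight H w = h}

/-- Outer boundary of a set of vertices. -/
def outerBoundary (G : SimpleGraph Ω) (A : Set Ω) : Set Ω :=
  {ξ | ξ ∉ A ∧ ∃ η ∈ A, G.Adj ξ η}

/-- A (nontrivial) cycle: nonempty, connected, proper, with `max_C H < min_{∂C} H`. -/
def IsCycleSet (G : SimpleGraph Ω) (H : Ω → ℝ) (C : Set Ω) : Prop :=
  C.Nonempty ∧ (G.induce C).Connected ∧ C ≠ Set.univ ∧
    ∀ η ∈ C, ∀ ξ ∈ outerBoundary G C, H η < H ξ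

/-- A stable plateau: nonempty, connected, constant energy, strictly higher on the boundary. -/
def IsStablePlateau (G : SimpleGraph Ω) (H : Ω → ℝ) (P : Set Ω) : Prop :=
  P.Nonempty ∧ (G.induce P).Connected ∧ (∀ x ∈ P, ∀ y ∈ P, H x = H y) ∧
    ∀ x ∈ P, ∀ ζ ∈ outerBoundary G P, H x < H ζ

/-- Communication height between two sets. -/
noncomputable def commHeightSet (G : SimpleGraph Ω) (H : Ω → ℝ) (A B : Set Ω) : ℝ :=
  sInf {h : ℝ | ∃ a ∈ A, ∃ b ∈ B, commHeight G H a b = h}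

/-- The bottom of a set: the minimizers of `H` on it. -/
def bottom (H : Ω → ℝ) (C : Set Ω) : Set Ω := {x ∈ C | ∀ y ∈ C, H x ≤ H y}

/-- `A` is a connected component of `S`: a maximal nonempty connected subset of `S`. -/
def IsConnectedComponentOf (G : SimpleGraph Ω) (S A : Set Ω) : Prop :=
  A ⊆ S ∧ A.Nonempty ∧ (G.induce A).Connected ∧
    ∀ B : Set Ω, A ⊆ B → B ⊆ S → (G.induce B).Connected → B = A

/-!
A minimizer `ξ` of `H` on the valley `Vᵢ` is a local minimum at the scale of `Φ`: every `ζ`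
with `Φ(ξ, ζ) ≤ H(ξ)` again lies in `Vᵢ`, because `Φ(Pᵢ, ·)` obeys the ultrametric inequality.
Hence the vertices joined to `ξ` by paths at the constant level `H(ξ)` form a stable plateau,
which is some `Pⱼ`. If `j ≠ i`, then `ξ ∈ Pⱼ` would give `Φ(Pᵢ, ξ) ≥ Φ(Pᵢ, ∪_{j≠i} Pⱼ)`,
contradicting `ξ ∈ Vᵢ`; so the minimizers lie in `Pᵢ`. Conversely `Pᵢ ⊆ Vᵢ`, since a path
leaving `Pᵢ` must cross its boundary, where `H > H(Pᵢ)`; thus `H(Pᵢ)` is the minimum on `Vᵢ`.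
-/

lemma List.foldr_max_le_iff {α : Type*} [LinearOrder α] {l : List α} {b c : α} :
    l.foldr max b ≤ c ↔ b ≤ c ∧ ∀ x ∈ l, x ≤ c := by
  induction l with
  | nil => simp
  | cons a t ih => simp only [List.foldr_cons, max_le_iff, ih, List.forall_mem_cons]; tauto

lemma List.foldr_max_mem {α : Type*} [LinearOrder α] (l : List α) (b : α) :
    l.foldr max b ∈ b :: l := by
  induction l with
  | nil => simp
  | cons a t ih =>
    rcases max_choice a (t.foldr max b) with h | h <;> simp only [List.foldr_cons, h] at ih ⊢
    · simp
    · simp only [List.mem_cons] at ih ⊢; tauto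

section WalkHeight

variable {G : SimpleGraph Ω} {H : Ω → ℝ} {a b : Ω}

lemma le_walkHeight (w : G.Walk a b) {x : Ω} (hx : x ∈ w.support) : H x ≤ walkHeight H w :=
  List.le_max_of_le' _ (List.mem_map_of_mem hx) le_rfl

lemma walkHeight_le_iff (w : G.Walk a b) {c : ℝ} :
    walkHeight H w ≤ c ↔ ∀ x ∈ w.support, H x ≤ c := by
  simp only [walkHeight, List.foldr_max_le_iff, List.forall_mem_map, and_iff_right_iff_imp]
  exact fun h => h b w.end_mem_support

lemma walkHeight_mem_range (w : G.Walk a b) : walkHeight H w ∈ Set.range H := by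
  rcases List.mem_cons.mp (List.foldr_max_mem (w.support.map H) (H b)) with h | h
  · exact ⟨b, h.symm⟩
  · obtain ⟨x, -, hx⟩ := List.mem_map.mp h
    exact ⟨x, hx⟩

end WalkHeight

section CommHeight

variable [Finite Ω] {G : SimpleGraph Ω} {H : Ω → ℝ}

lemma finite_walkHeights (a b : Ω) :
    {h : ℝ | ∃ w : G.Walk a b, walkHeight H w = h}.Finite :=
  (Set.finite_range H).subset (by rintro _ ⟨w, rfl⟩; exact walkHeight_mem_range w)

lemma commHeight_le_of_forall_le {a b : Ω} (w : G.Walk a b) {c : ℝ}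
    (hw : ∀ x ∈ w.support, H x ≤ c) : commHeight G H a b ≤ c :=
  (csInf_le (finite_walkHeights a b).bddBelow ⟨w, rfl⟩).trans ((walkHeight_le_iff w).mpr hw)

lemma commHeight_self_le (a : Ω) : commHeight G H a a ≤ H a :=
  commHeight_le_of_forall_le (Walk.nil : G.Walk a a) (by simp)

lemma exists_walkHeight_eq_commHeight (hG : G.Preconnected) (a b : Ω) :
    ∃ w : G.Walk a b, walkHeight H w = commHeight G H a b := by
  refine Set.Nonempty.csInf_mem ?_ (finite_walkHeights a b)
  exact (hG a b).elim fun w => ⟨_, w, rfl⟩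

lemma le_commHeight (hG : G.Preconnected) (a b : Ω) : H b ≤ commHeight G H a b := by
  obtain ⟨w, hw⟩ := exists_walkHeight_eq_commHeight (H := H) hG a b
  exact hw ▸ le_walkHeight w w.end_mem_support

lemma commHeight_le_max (hG : G.Preconnected) (a b c : Ω) :
    commHeight G H a c ≤ max (commHeight G H a b) (commHeight G H b c) := by
  obtain ⟨w₁, hw₁⟩ := exists_walkHeight_eq_commHeight (H := H) hG a b
  obtain ⟨w₂, hw₂⟩ := exists_walkHeight_eq_commHeight (H := H) hG b c
  refine commHeight_le_of_forall_le (w₁.append w₂) fun x hx => ?_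
  rcases (Walk.mem_support_append_iff _ _).mp hx with hx | hx
  · exact le_max_of_le_left (hw₁ ▸ le_walkHeight w₁ hx)
  · exact le_max_of_le_right (hw₂ ▸ le_walkHeight w₂ hx)

lemma finite_commHeights (A B : Set Ω) :
    {h : ℝ | ∃ a ∈ A, ∃ b ∈ B, commHeight G H a b = h}.Finite :=
  (Set.finite_range fun q : Ω × Ω => commHeight G H q.1 q.2).subset
    (by rintro _ ⟨a, -, b, -, rfl⟩; exact ⟨(a, b), rfl⟩)

lemma exists_commHeight_eq_commHeightSet {A B : Set Ω} (hA : A.Nonempty) (hB : B.Nonempty) :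
    ∃ a ∈ A, ∃ b ∈ B, commHeight G H a b = commHeightSet G H A B := by
  obtain ⟨a, ha⟩ := hA
  obtain ⟨b, hb⟩ := hB
  refine Set.Nonempty.csInf_mem ?_ (finite_commHeights A B)
  exact ⟨_, a, ha, b, hb, rfl⟩

lemma commHeightSet_le_commHeight {A B : Set Ω} {a b : Ω} (ha : a ∈ A) (hb : b ∈ B) :
    commHeightSet G H A B ≤ commHeight G H a b :=
  csInf_le (finite_commHeights A B).bddBelow ⟨a, ha, b, hb, rfl⟩

lemma commHeightSet_le_commHeightSet_singleton {A B : Set Ω} (hA : A.Nonempty) {b : Ω}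
    (hb : b ∈ B) : commHeightSet G H A B ≤ commHeightSet G H A {b} := by
  obtain ⟨a, ha, _, rfl, hab⟩ := exists_commHeight_eq_commHeightSet (H := H) hA
    (Set.singleton_nonempty b)
  exact hab ▸ commHeightSet_le_commHeight ha hb

lemma le_commHeightSet_singleton (hG : G.Preconnected) {A : Set Ω} (hA : A.Nonempty) (b : Ω) :
    H b ≤ commHeightSet G H A {b} := by
  obtain ⟨a, -, _, rfl, hab⟩ := exists_commHeight_eq_commHeightSet (H := H) hA
    (Set.singleton_nonempty b)
  exact hab ▸ le_commHeight hG a _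

lemma commHeightSet_singleton_le_max (hG : G.Preconnected) {A : Set Ω} (hA : A.Nonempty)
    (b c : Ω) :
    commHeightSet G H A {c} ≤ max (commHeightSet G H A {b}) (commHeight G H b c) := by
  obtain ⟨a, ha, _, rfl, hab⟩ := exists_commHeight_eq_commHeightSet (H := H) hA
    (Set.singleton_nonempty b)
  calc commHeightSet G H A {c} ≤ commHeight G H a c := commHeightSet_le_commHeight ha rfl
    _ ≤ _ := hab ▸ commHeight_le_max hG a _ c

end CommHeight

section Plateau

variable {G : SimpleGraph Ω} {H : Ω → ℝ}

lemma exists_walk_support_subset {S : Set Ω} (hS : (G.induce S).Preconnected) {a b : Ω}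
    (ha : a ∈ S) (hb : b ∈ S) : ∃ w : G.Walk a b, ∀ x ∈ w.support, x ∈ S := by
  obtain ⟨w⟩ := hS ⟨a, ha⟩ ⟨b, hb⟩
  refine ⟨w.map (Embedding.induce S).toHom, fun x hx => ?_⟩
  obtain ⟨y, -, rfl⟩ := List.mem_map.mp ((Walk.support_map _ w) ▸ hx)
  exact y.2

lemma IsStablePlateau.exists_mem_support_lt {P : Set Ω} (hP : IsStablePlateau G H P)
    {x a b : Ω} (hx : x ∈ P) (w : G.Walk a b) (ha : a ∈ P) (hb : b ∉ P) :
    ∃ v ∈ w.support, H x < H v := by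
  obtain ⟨d, hd, hd₁, hd₂⟩ := w.exists_boundary_dart P ha hb
  refine ⟨d.snd, w.dart_snd_mem_support_of_mem_darts hd, ?_⟩
  rw [hP.2.2.1 x hx _ hd₁]
  exact hP.2.2.2 _ hd₁ _ ⟨hd₂, _, hd₁, d.adj.symm⟩

lemma IsStablePlateau.subset_of_mem_of_mem {P Q : Set Ω} (hP : IsStablePlateau G H P)
    (hQ : IsStablePlateau G H Q) {x : Ω} (hxP : x ∈ P) (hxQ : x ∈ Q) : Q ⊆ P := by
  intro y hyQ
  by_contra hyP
  obtain ⟨w, hw⟩ := exists_walk_support_subset hQ.2.1.preconnected hxQ hyQ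
  obtain ⟨v, hv, hxv⟩ := hP.exists_mem_support_lt hxP w hxP hyP
  exact hxv.ne (hQ.2.2.1 x hxQ v (hw v hv))

lemma IsStablePlateau.disjoint_of_ne {P Q : Set Ω} (hP : IsStablePlateau G H P)
    (hQ : IsStablePlateau G H Q) (hPQ : P ≠ Q) : Disjoint P Q :=
  Set.disjoint_left.mpr fun _ hxP hxQ =>
    hPQ ((hQ.subset_of_mem_of_mem hP hxQ hxP).antisymm (hP.subset_of_mem_of_mem hQ hxP hxQ))

lemma IsStablePlateau.lt_commHeightSet [Finite Ω] (hG : G.Preconnected) {P B : Set Ω}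
    (hP : IsStablePlateau G H P) (hB : B.Nonempty) (hPB : Disjoint P B) {x : Ω} (hx : x ∈ P) :
    H x < commHeightSet G H P B := by
  obtain ⟨a, ha, b, hb, hab⟩ := exists_commHeight_eq_commHeightSet (H := H) hP.1 hB
  obtain ⟨w, hw⟩ := exists_walkHeight_eq_commHeight (H := H) hG a b
  obtain ⟨v, hv, hxv⟩ := hP.exists_mem_support_lt hx w ha (Set.disjoint_right.mp hPB hb)
  exact hab ▸ hw ▸ hxv.trans_le (le_walkHeight w hv)

end Plateau

def levelComponent (G : SimpleGraph Ω) (H : Ω → ℝ) (ξ : Ω) : Set Ω :=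
  {ζ | ∃ w : G.Walk ξ ζ, ∀ x ∈ w.support, H x = H ξ}

def valley (G : SimpleGraph Ω) (H : Ω → ℝ) (A B : Set Ω) : Set Ω :=
  {η | commHeightSet G H A {η} < commHeightSet G H A B}

lemma mem_levelComponent_self {G : SimpleGraph Ω} {H : Ω → ℝ} (ξ : Ω) :
    ξ ∈ levelComponent G H ξ :=
  ⟨Walk.nil, by simp⟩

section Valley

variable [Finite Ω] {G : SimpleGraph Ω} {H : Ω → ℝ}

lemma isStablePlateau_levelComponent {ξ : Ω}
    (hξ : ∀ ζ, commHeight G H ξ ζ ≤ H ξ → H ξ ≤ H ζ) :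
    IsStablePlateau G H (levelComponent G H ξ) := by
  classical
  have hprefix : ∀ ζ (w : G.Walk ξ ζ), (∀ x ∈ w.support, H x = H ξ) →
      ∀ x ∈ w.support, x ∈ levelComponent G H ξ := fun _ w hw x hx =>
    ⟨w.takeUntil x hx, fun y hy => hw y (w.support_takeUntil_subset_support hx hy)⟩
  refine ⟨⟨ξ, mem_levelComponent_self ξ⟩, ?_, ?_, ?_⟩
  · refine induce_connected_of_patches ξ (mem_levelComponent_self ξ) fun {ζ} ⟨w, hw⟩ => ?_
    exact ⟨{x | x ∈ w.support}, hprefix ζ w hw, w.start_mem_support, w.end_mem_support,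
      w.connected_induce_support.preconnected _ _⟩
  · rintro x ⟨wx, hwx⟩ y ⟨wy, hwy⟩
    rw [hwx x wx.end_mem_support, hwy y wy.end_mem_support]
  · rintro x ⟨wx, hwx⟩ ζ ⟨hζ, y, ⟨w, hw⟩, hζy⟩
    rw [hwx x wx.end_mem_support]
    by_contra! hζξ
    have hsupp : ∀ z ∈ (w.concat hζy.symm).support, z ∈ w.support ∨ z = ζ := by
      simp [Walk.support_concat]
    have hle : ∀ z ∈ (w.concat hζy.symm).support, H z ≤ H ξ := fun z hz =>
      (hsupp z hz).elim (fun h => (hw z h).le) (fun h => h ▸ hζξ)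
    have hζeq : H ζ = H ξ := hζξ.antisymm (hξ ζ (commHeight_le_of_forall_le _ hle))
    exact hζ ⟨w.concat hζy.symm, fun z hz => (hsupp z hz).elim (hw z) (fun h => h ▸ hζeq)⟩

lemma IsStablePlateau.subset_valley (hG : G.Preconnected) {P B : Set Ω}
    (hP : IsStablePlateau G H P) (hB : B.Nonempty) (hPB : Disjoint P B) :
    P ⊆ valley G H P B := fun x hx =>
  (commHeightSet_le_commHeight hx (Set.mem_singleton x)).trans_lt
    ((commHeight_self_le x).trans_lt (hP.lt_commHeightSet hG hB hPB hx))

lemma bottom_valley_subset (hG : G.Preconnected) {ι : Type*} (P : ι → Set Ω)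
    (hP : ∀ i, IsStablePlateau G H (P i))
    (hPall : ∀ Q : Set Ω, IsStablePlateau G H Q → ∃ i, Q = P i) (i : ι) :
    bottom H (valley G H (P i) {x | ∃ j, j ≠ i ∧ x ∈ P j}) ⊆ P i := by
  rintro ξ ⟨hξV, hξmin⟩
  have hlocal : ∀ ζ, commHeight G H ξ ζ ≤ H ξ → H ξ ≤ H ζ := fun ζ hζ =>
    hξmin ζ <| (commHeightSet_singleton_le_max hG (hP i).1 ξ ζ).trans_lt <|
      max_lt hξV (hζ.trans_lt ((le_commHeightSet_singleton hG (hP i).1 ξ).trans_lt hξV))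
  obtain ⟨j, hj⟩ := hPall _ (isStablePlateau_levelComponent hlocal)
  have hξj : ξ ∈ P j := hj ▸ mem_levelComponent_self ξ
  by_contra hξi
  have hji : j ≠ i := by rintro rfl; exact hξi hξj
  exact (commHeightSet_le_commHeightSet_singleton (B := {x | ∃ j, j ≠ i ∧ x ∈ P j}) (hP i).1
    ⟨j, hji, hξj⟩).not_gt hξV

end Valley

lemma bottom_eq_of_bottom_subset {H : Ω → ℝ} {C P : Set Ω} (hC : C.Finite) (hPC : P ⊆ C)
    (hP : P.Nonempty) (hPH : ∀ x ∈ P, ∀ y ∈ P, H x = H y) (hbot : bottom H C ⊆ P) :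
    bottom H C = P := by
  obtain ⟨ξ, hξC, hξmin⟩ := Set.exists_min_image C H hC (hP.mono hPC)
  refine hbot.antisymm fun x hx => ⟨hPC hx, fun y hy => ?_⟩
  rw [hPH x hx ξ (hbot (show ξ ∈ bottom H C from ⟨hξC, hξmin⟩))]
  exact hξmin y hy

theorem bottom_of_valley_general [Fintype Ω] (G : SimpleGraph Ω) (hG : G.Connected) (H : Ω → ℝ)
    (ν : ℕ) (hν : 2 ≤ ν) (P : Fin ν → Set Ω)
    (hP : ∀ i, IsStablePlateau G H (P i))
    (hPinj : Function.Injective P)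
    (hPall : ∀ Q : Set Ω, IsStablePlateau G H Q → ∃ i, Q = P i)
    (p : Fin ν → Ω)
    (Γ : Fin ν → ℝ)
    (hΓ : ∀ i, Γ i = commHeightSet G H (P i) {x | ∃ j, j ≠ i ∧ x ∈ P j} - H (p i))
    (V : Fin ν → Set Ω)
    (hV : ∀ i, V i = {η | commHeightSet G H (P i) {η} - H (p i) < Γ i}) :
    ∀ i, bottom H (V i) = P i := by
  intro i
  have : Nontrivial (Fin ν) := Fin.nontrivial_iff_two_le.mpr hν
  obtain ⟨j, hji⟩ := exists_ne i
  have hothers : {x | ∃ j, j ≠ i ∧ x ∈ P j}.Nonempty := ⟨_, j, hji, (hP j).1.some_mem⟩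
  have hdisj : Disjoint (P i) {x | ∃ j, j ≠ i ∧ x ∈ P j} :=
    Set.disjoint_left.mpr fun _ hxi ⟨k, hki, hxk⟩ =>
      Set.disjoint_left.mp ((hP i).disjoint_of_ne (hP k) (hPinj.ne hki.symm)) hxi hxk
  have hVi : V i = valley G H (P i) {x | ∃ j, j ≠ i ∧ x ∈ P j} := by
    rw [hV i, hΓ i]
    simp only [valley, sub_lt_sub_iff_right]
  rw [hVi]
  exact bottom_eq_of_bottom_subset (Set.toFinite _)
    ((hP i).subset_valley hG.preconnected hothers hdisj) (hP i).1 (hP i).2.2.1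
    (bottom_valley_subset hG.preconnected P hP hPall i)

/-- the bottom of the valley `Vᵢ` is exactly the stable plateau `Pᵢ`. -/
theorem bottom_of_valley [Fintype Ω] (G : SimpleGraph Ω) (hG : G.Connected) (H : Ω → ℝ)
    (ν : ℕ) (hν : 2 ≤ ν) (P : Fin ν → Set Ω)
    (hP : ∀ i, IsStablePlateau G H (P i))
    (hPinj : Function.Injective P)
    (hPall : ∀ Q : Set Ω, IsStablePlateau G H Q → ∃ i, Q = P i)
    (p : Fin ν → Ω) (hp : ∀ i, p i ∈ P i)
    (Γ : Fin ν → ℝ)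
    (hΓ : ∀ i, Γ i = commHeightSet G H (P i) {x | ∃ j, j ≠ i ∧ x ∈ P j} - H (p i))
    (V : Fin ν → Set Ω)
    (hV : ∀ i, V i = {η | commHeightSet G H (P i) {η} - H (p i) < Γ i}) :
    ∀ i, bottom H (V i) = P i :=
  bottom_of_valley_general G hG H ν hν P hP hPinj hPall p Γ hΓ V hV
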